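/- arXiv:2510.23670 — 3 statements merged into one kernel-verified Lean document; each statement's English description precedes it below -/
import Mathlib

section
/- Let n ≥ 6 and let G_n denote the n-vertex graph that is the disjoint union of one edge K_2 and n − 2 isolated vertices. Then for every finite simple graph G on n vertices, av_1(G) ≤ n/2 + 1, and equality holds if and only if G is isomorphic to G_n. -/
open scoped Classical
open Finset

noncomputable section

/-- The number of edges of `G` whose endpoints both lie in `S`. -/
def edgesIn {V : Type*} [Fintype V] (G : SimpleGraph V) (S : Finset V) : ℕ :=
  (G.edgeFinset.filter fun e => ∀ v ∈ e, v ∈ S).card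

/-- The finset of `l`-nearly independent vertex sets of `G`: those vertex subsets
inducing exactly `l` edges. -/
def nearlyIndep {V : Type*} [Fintype V] (G : SimpleGraph V) (l : ℕ) : Finset (Finset V) :=
  Finset.univ.filter fun S => edgesIn G S = l

/-- `σ_l(G)`: the number of `l`-nearly independent vertex sets of `G`. -/
def sigmaNI {V : Type*} [Fintype V] (G : SimpleGraph V) (l : ℕ) : ℕ :=
  (nearlyIndep G l).card

/-- `σ_l(G, k)`: the number of `l`-nearly independent vertex sets of `G` of cardinality `k`. -/
def sigmaNIk {V : Type*} [Fintype V] (G : SimpleGraph V) (l k : ℕ) : ℕ :=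
  ((nearlyIndep G l).filter fun S => S.card = k).card

/-- `S_l(G)`: the sum of the cardinalities of the `l`-nearly independent vertex sets of `G`. -/
def sumNI {V : Type*} [Fintype V] (G : SimpleGraph V) (l : ℕ) : ℕ :=
  ∑ S ∈ nearlyIndep G l, S.card

/-- `av_l(G)`: the average size of an `l`-nearly independent vertex set of `G`
(`0` if there are none). -/
def avNI {V : Type*} [Fintype V] (G : SimpleGraph V) (l : ℕ) : ℚ :=
  if sigmaNI G l = 0 then 0 else (sumNI G l : ℚ) / (sigmaNI G l : ℚ)

/-- `G − A`: the subgraph of `G` induced by the vertices not in `A`. -/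
def deleteVerts {V : Type*} (G : SimpleGraph V) (A : Set V) : SimpleGraph ↥(Aᶜ) :=
  G.induce Aᶜ

/-- For an edge `e = uv`, the set `N(u) ∪ N(v)`. -/
def nbhdUnion {V : Type*} (G : SimpleGraph V) : Sym2 V → Set V :=
  Sym2.lift ⟨fun u v => G.neighborSet u ∪ G.neighborSet v, fun u v => Set.union_comm _ _⟩

/-- The `n`-vertex graph consisting of a single edge (between `0` and `1`) together with
`n - 2` isolated vertices. -/
def singleEdgeGraph (n : ℕ) : SimpleGraph (Fin n) :=
  SimpleGraph.fromRel fun a b => a.val = 0 ∧ b.val = 1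

/-!
Double count the pairs `(T, x)` with `T` a `1`-nearly independent set and `x ∉ T`; there are
`n σ₁ - S₁` of them. If `insert x T` is again `1`-nearly independent, then `(insert x T, x)` is a
pair `(S, x)` with `x ∈ S` and `S.erase x` `1`-nearly independent; each such `S` has exactly
`|S| - 2` such `x`, namely those off its unique edge, so there are `S₁ - 2 σ₁` pairs of this kind.
Writing `E` for the remaining pairs, `2 S₁ + E = (n + 2) σ₁`, hence `av₁ ≤ n/2 + 1`, with
equality iff `σ₁ ≠ 0` and `E = 0`. Then the `1`-nearly independent sets are closed under adding
vertices, so the whole vertex set is one of them and `G` has exactly one edge.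
-/

section SetFamily

variable {α : Type*} [Fintype α] [DecidableEq α]

def upExits (F : Finset (Finset α)) : ℕ :=
  ∑ T ∈ F, #{x ∈ Tᶜ | insert x T ∉ F}

theorem sum_card_filter_erase_mem_eq (F : Finset (Finset α)) :
    ∑ S ∈ F, #{x ∈ S | S.erase x ∈ F} = ∑ T ∈ F, #{x ∈ Tᶜ | insert x T ∈ F} := by
  rw [← card_sigma, ← card_sigma]
  refine card_bij' (fun p _ => ⟨p.1.erase p.2, p.2⟩) (fun p _ => ⟨insert p.2 p.1, p.2⟩)
    ?_ ?_ ?_ ?_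
  · rintro ⟨S, x⟩ hp
    simp only [mem_sigma, mem_filter] at hp ⊢
    rw [insert_erase hp.2.1]
    exact ⟨hp.2.2, by simp, hp.1⟩
  · rintro ⟨T, x⟩ hp
    simp only [mem_sigma, mem_filter, mem_compl] at hp ⊢
    rw [erase_insert hp.2.1]
    exact ⟨hp.2.2, mem_insert_self x T, hp.1⟩
  · rintro ⟨S, x⟩ hp
    simp only [mem_sigma, mem_filter] at hp
    simp [insert_erase hp.2.1]
  · rintro ⟨T, x⟩ hp
    simp only [mem_sigma, mem_filter, mem_compl] at hp
    simp [erase_insert hp.2.1]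

theorem sum_card_filter_erase_mem_add_upExits (F : Finset (Finset α)) :
    ∑ S ∈ F, #{x ∈ S | S.erase x ∈ F} + upExits F = ∑ T ∈ F, #Tᶜ := by
  rw [sum_card_filter_erase_mem_eq, upExits, ← sum_add_distrib]
  exact sum_congr rfl fun T _ => card_filter_add_card_filter_not _

theorem upExits_eq_zero_iff {F : Finset (Finset α)} :
    upExits F = 0 ↔ ∀ T ∈ F, ∀ x, insert x T ∈ F := by
  simp only [upExits, sum_eq_zero_iff, card_eq_zero, filter_eq_empty_iff, mem_compl, not_not]
  refine forall₂_congr fun T hT => forall_congr' fun x => ?_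
  by_cases hx : x ∈ T
  · simp [hx, insert_eq_of_mem hx, hT]
  · simp [hx]

theorem univ_mem_of_forall_insert_mem {F : Finset (Finset α)}
    (hF : ∀ T ∈ F, ∀ x, insert x T ∈ F) {T : Finset α} (hT : T ∈ F) : univ ∈ F := by
  have hunion : ∀ s : Finset α, s ∪ T ∈ F := by
    intro s
    induction s using Finset.induction_on with
    | empty => simpa using hT
    | insert x s _ ih => simpa [insert_union] using hF _ ih x
  simpa only [union_eq_left.mpr (subset_univ T)] using hunion univ

end SetFamily

section NearlyIndependent

variable {V : Type*} [Fintype V] (G : SimpleGraph V)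

theorem mem_nearlyIndep {S : Finset V} {l : ℕ} : S ∈ nearlyIndep G l ↔ edgesIn G S = l := by
  simp [nearlyIndep]

theorem edgesIn_mono {S T : Finset V} (h : S ⊆ T) : edgesIn G S ≤ edgesIn G T :=
  card_le_card <| monotone_filter_right _ fun _ _ hS v hv => h (hS v hv)

theorem edgesIn_univ : edgesIn G univ = #G.edgeFinset := by
  simp [edgesIn]

theorem edgesIn_erase (S : Finset V) (x : V) :
    edgesIn G (S.erase x) = #{e ∈ G.edgeFinset | (∀ v ∈ e, v ∈ S) ∧ x ∉ e} := by
  rw [edgesIn]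
  congr 1
  refine filter_congr fun e _ => ⟨fun h => ⟨fun v hv => mem_of_mem_erase (h v hv),
    fun hx => notMem_erase x S (h x hx)⟩, fun h v hv => mem_erase.mpr ⟨?_, h.1 v hv⟩⟩
  rintro rfl
  exact h.2 hv

/-- `S.erase x` is again `1`-nearly independent exactly when `x` avoids the unique edge of `S`. -/
theorem card_filter_erase_mem_nearlyIndep_one {S : Finset V} (hS : S ∈ nearlyIndep G 1) :
    #{x ∈ S | S.erase x ∈ nearlyIndep G 1} + 2 = #S := by
  obtain ⟨e, he⟩ := card_eq_one.mp ((mem_nearlyIndep G).mp hS)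
  have heS : ∀ v ∈ e, v ∈ S := (mem_filter.mp (he ▸ mem_singleton_self e)).2
  have hedge : e ∈ G.edgeSet := SimpleGraph.mem_edgeFinset.mp
    (mem_filter.mp (he ▸ mem_singleton_self e)).1
  have hfilter : {x ∈ S | S.erase x ∈ nearlyIndep G 1} = S \ e.toFinset := by
    ext x
    simp only [mem_filter, mem_sdiff, Sym2.mem_toFinset, mem_nearlyIndep, edgesIn_erase,
      ← filter_filter, he, filter_singleton]
    by_cases hx : x ∈ e <;> simp [hx]
  have hcard : #e.toFinset = 2 := by
    rw [Sym2.card_toFinset, if_neg (G.not_isDiag_of_mem_edgeSet hedge)]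
  rw [hfilter, card_sdiff_of_subset fun v hv => heS v (Sym2.mem_toFinset.mp hv), hcard]
  have := card_le_card (s := e.toFinset) fun v hv => heS v (Sym2.mem_toFinset.mp hv)
  omega

theorem two_mul_sumNI_add_upExits :
    2 * sumNI G 1 + upExits (nearlyIndep G 1) = (Fintype.card V + 2) * sigmaNI G 1 := by
  have hexits := sum_card_filter_erase_mem_add_upExits (nearlyIndep G 1)
  have hsum : ∑ S ∈ nearlyIndep G 1, #{x ∈ S | S.erase x ∈ nearlyIndep G 1}
      + 2 * sigmaNI G 1 = sumNI G 1 := by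
    rw [sumNI, sigmaNI, mul_comm, ← smul_eq_mul, ← sum_const, ← sum_add_distrib]
    exact sum_congr rfl fun S hS => card_filter_erase_mem_nearlyIndep_one G hS
  have hcompl : sumNI G 1 + ∑ T ∈ nearlyIndep G 1, #Tᶜ = Fintype.card V * sigmaNI G 1 := by
    rw [sumNI, sigmaNI, ← sum_add_distrib, mul_comm, ← smul_eq_mul, ← sum_const]
    exact sum_congr rfl fun T _ => card_add_card_compl T
  linarith

/-- A nonempty family closed under adding vertices contains `univ`, which induces all of `G`. -/
theorem sigmaNI_ne_zero_and_upExits_eq_zero_iff :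
    sigmaNI G 1 ≠ 0 ∧ upExits (nearlyIndep G 1) = 0 ↔ #G.edgeFinset = 1 := by
  rw [upExits_eq_zero_iff, sigmaNI, Ne, card_eq_zero, ← Ne, ← nonempty_iff_ne_empty]
  constructor
  · rintro ⟨⟨T, hT⟩, hF⟩
    rw [← edgesIn_univ, ← mem_nearlyIndep]
    exact univ_mem_of_forall_insert_mem hF hT
  · intro hE
    have huniv : univ ∈ nearlyIndep G 1 := by rw [mem_nearlyIndep, edgesIn_univ, hE]
    refine ⟨⟨univ, huniv⟩, fun T hT x => ?_⟩
    rw [mem_nearlyIndep] at hT ⊢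
    have hle := edgesIn_mono G (subset_univ (insert x T))
    have hge := edgesIn_mono G (subset_insert x T)
    rw [edgesIn_univ, hE] at hle
    omega

end NearlyIndependent

theorem avNI_le {V : Type*} [Fintype V] {G : SimpleGraph V} {l : ℕ} {c : ℚ} (hc : 0 ≤ c)
    (h : (sumNI G l : ℚ) ≤ c * sigmaNI G l) : avNI G l ≤ c := by
  unfold avNI
  split_ifs with h0
  · exact hc
  · rw [div_le_iff₀ (by positivity)]
    exact h

theorem avNI_eq_iff {V : Type*} [Fintype V] {G : SimpleGraph V} {l : ℕ} {c : ℚ} (hc : c ≠ 0) :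
    avNI G l = c ↔ sigmaNI G l ≠ 0 ∧ (sumNI G l : ℚ) = c * sigmaNI G l := by
  unfold avNI
  split_ifs with h0
  · simp [h0, hc.symm]
  · rw [div_eq_iff (by positivity)]
    simp [h0]

section SingleEdge

variable {V W : Type*} [Fintype V] [Fintype W]

theorem exists_equiv_apply_eq_and_apply_eq (h : Fintype.card V = Fintype.card W) {u w : V}
    {u' w' : W} (huw : u ≠ w) (huw' : u' ≠ w') : ∃ f : V ≃ W, f u = u' ∧ f w = w' := by
  let f₀ := (Fintype.equivOfCardEq h).trans (Equiv.swap (Fintype.equivOfCardEq h u) u')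
  have hf₀ : f₀ u = u' := by simp [f₀]
  refine ⟨f₀.trans (Equiv.swap (f₀ w) w'), ?_, by simp⟩
  have hne : u' ≠ f₀ w := hf₀ ▸ f₀.injective.ne huw
  simp [hf₀, Equiv.swap_apply_of_ne_of_ne hne huw']

theorem adj_iff_of_edgeFinset_eq {G : SimpleGraph V} {e : Sym2 V} (he : G.edgeFinset = {e})
    (a b : V) : G.Adj a b ↔ s(a, b) = e := by
  rw [← SimpleGraph.mem_edgeSet, ← SimpleGraph.mem_edgeFinset, he, mem_singleton]

theorem nonempty_iso_of_card_edgeFinset_eq_one (h : Fintype.card V = Fintype.card W)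
    {G : SimpleGraph V} {H : SimpleGraph W} (hG : #G.edgeFinset = 1) (hH : #H.edgeFinset = 1) :
    Nonempty (G ≃g H) := by
  obtain ⟨e, he⟩ := card_eq_one.mp hG
  obtain ⟨e', he'⟩ := card_eq_one.mp hH
  induction e using Sym2.ind with | _ u w => ?_
  induction e' using Sym2.ind with | _ u' w' => ?_
  have huw : G.Adj u w := (adj_iff_of_edgeFinset_eq he u w).mpr rfl
  have huw' : H.Adj u' w' := (adj_iff_of_edgeFinset_eq he' u' w').mpr rfl
  obtain ⟨f, hfu, hfw⟩ := exists_equiv_apply_eq_and_apply_eq h huw.ne huw'.ne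
  refine ⟨⟨f, fun {a b} => ?_⟩⟩
  rw [adj_iff_of_edgeFinset_eq he, adj_iff_of_edgeFinset_eq he', ← hfu, ← hfw,
    ← Sym2.map_mk, ← Sym2.map_mk, (Sym2.map.injective f.injective).eq_iff]

theorem card_edgeFinset_singleEdgeGraph {n : ℕ} (hn : 2 ≤ n) :
    #(singleEdgeGraph n).edgeFinset = 1 := by
  rw [card_eq_one]
  refine ⟨s(⟨0, by omega⟩, ⟨1, by omega⟩), ?_⟩
  ext e
  induction e using Sym2.ind with
  | _ a b =>
    rw [SimpleGraph.mem_edgeFinset, SimpleGraph.mem_edgeSet]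
    simp only [singleEdgeGraph, SimpleGraph.fromRel_adj, mem_singleton, Sym2.eq_iff, Fin.ext_iff]
    omega

theorem card_edgeFinset_eq_one_iff_nonempty_iso {n : ℕ} (hn : 2 ≤ n)
    (hV : Fintype.card V = n) (G : SimpleGraph V) :
    #G.edgeFinset = 1 ↔ Nonempty (G ≃g singleEdgeGraph n) := by
  refine ⟨fun hG => nonempty_iso_of_card_edgeFinset_eq_one (by simpa using hV) hG
    (card_edgeFinset_singleEdgeGraph hn), fun ⟨φ⟩ => ?_⟩
  rw [φ.card_edgeFinset_eq, card_edgeFinset_singleEdgeGraph hn]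

end SingleEdge

theorem stmt12 {V : Type*} [Fintype V] (n : ℕ) (hn : 6 ≤ n) (hV : Fintype.card V = n)
    (G : SimpleGraph V) :
    avNI G 1 ≤ (n : ℚ) / 2 + 1 ∧
    (avNI G 1 = (n : ℚ) / 2 + 1 ↔ Nonempty (G ≃g singleEdgeGraph n)) := by
  have key : (2 * sumNI G 1 + upExits (nearlyIndep G 1) : ℚ) = (n + 2) * sigmaNI G 1 := by
    exact_mod_cast hV ▸ two_mul_sumNI_add_upExits G
  have hexits : (0 : ℚ) ≤ upExits (nearlyIndep G 1) := Nat.cast_nonneg _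
  rw [avNI_eq_iff (by positivity), ← card_edgeFinset_eq_one_iff_nonempty_iso (by omega) hV,
    ← sigmaNI_ne_zero_and_upExits_eq_zero_iff, ← Nat.cast_eq_zero (R := ℚ)]
  refine ⟨avNI_le (by positivity) (by linarith), and_congr_right fun _ => ?_⟩
  constructor <;> intro h <;> linarith
end
end

section
/- Let n > 8. Then the maximum value M of av_1 over all trees on n vertices satisfies n/2 < M < (n+1)/2; that is, there exists an n-vertex tree T with av_1(T) > n/2, and every n-vertex tree T satisfies av_1(T) < (n+1)/2. -/
open scoped Classical
open Finset

noncomputable section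

/-!
A set inducing exactly one edge `uv` is `{u, v}` together with an independent subset of
`R(uv) = V ∖ (N(u) ∪ N(v))`, so `∑_S f |S| = ∑_{uv} ∑_{I ⊆ R(uv) independent} f (|I| + 2)`.
The independent subsets of `R` form a lower set, so their average size is at most `|R| / 2`, with
strict inequality when `R` spans an edge. In a connected graph `|R(uv)| ≤ n - 3`, so every edge
contributes sets of average size at most `(n + 1) / 2`, and some edge strictly less.

For the lower bound take the broom: a star with centre `c` and a pendant edge `pq` attached to the
leaf `p`. Then `R(pq)` consists of the `n - 3` leaves of the star, all of whose `2 ^ (n - 3)`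
subsets are independent, and for `n ≥ 9` these outweigh the few sets coming from the other edges.
-/

theorem Nat.two_mul_sq_lt_two_pow_add_three_mul_add_one {k : ℕ} (hk : 6 ≤ k) :
    2 * k ^ 2 < 2 ^ k + 3 * k + 1 := by
  induction k, hk using Nat.le_induction with
  | base => norm_num
  | succ k hk ih => nlinarith [pow_succ 2 k, Nat.mul_le_mul_right k hk]

theorem Sym2.eq_or_eq_of_mk_eq_mk {α : Type*} {a b u v : α} (h : s(a, b) = s(u, v)) :
    a = u ∨ a = v :=
  Sym2.mem_iff.1 (h ▸ Sym2.mem_mk_left a b)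

namespace Finset

variable {α : Type*} [DecidableEq α] {𝒜 : Finset (Finset α)} {R t : Finset α} {a : α}

theorem sum_card_eq_sum_card_filter_mem (hR : ∀ s ∈ 𝒜, s ⊆ R) :
    ∑ s ∈ 𝒜, #s = ∑ a ∈ R, #{s ∈ 𝒜 | a ∈ s} := by
  calc ∑ s ∈ 𝒜, #s = ∑ s ∈ 𝒜, #(R ∩ s) :=
        sum_congr rfl fun s hs => by rw [inter_eq_right.2 (hR s hs)]
    _ = ∑ a ∈ R, #{s ∈ 𝒜 | a ∈ s} := by
        simp_rw [← filter_mem_eq_inter, card_eq_sum_ones, sum_filter]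
        exact sum_comm

theorem card_memberSubfamily_eq_card_filter_mem (a : α) (𝒜 : Finset (Finset α)) :
    #(𝒜.memberSubfamily a) = #{s ∈ 𝒜 | a ∈ s} := by
  have := card_memberSubfamily_add_card_nonMemberSubfamily a 𝒜
  have := card_filter_add_card_filter_not (s := 𝒜) (fun s => a ∈ s)
  rw [nonMemberSubfamily] at *
  omega

theorem IsLowerSet.two_mul_card_filter_mem_le (h𝒜 : IsLowerSet (𝒜 : Set (Finset α))) (a : α) :
    2 * #{s ∈ 𝒜 | a ∈ s} ≤ #𝒜 := by
  have := card_le_card (h𝒜.memberSubfamily_subset_nonMemberSubfamily (a := a))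
  have := card_memberSubfamily_add_card_nonMemberSubfamily a 𝒜
  rw [card_memberSubfamily_eq_card_filter_mem] at *
  omega

theorem IsLowerSet.two_mul_card_filter_mem_lt (h𝒜 : IsLowerSet (𝒜 : Set (Finset α)))
    (ht : t ∈ 𝒜) (hat : a ∉ t) (hins : insert a t ∉ 𝒜) :
    2 * #{s ∈ 𝒜 | a ∈ s} < #𝒜 := by
  have hssub : 𝒜.memberSubfamily a ⊂ 𝒜.nonMemberSubfamily a :=
    ssubset_iff_subset_ne.2 ⟨h𝒜.memberSubfamily_subset_nonMemberSubfamily, fun h => by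
      have : t ∈ 𝒜.memberSubfamily a := h ▸ mem_nonMemberSubfamily.2 ⟨ht, hat⟩
      exact hins (mem_memberSubfamily.1 this).1⟩
  have := card_lt_card hssub
  have := card_memberSubfamily_add_card_nonMemberSubfamily a 𝒜
  rw [card_memberSubfamily_eq_card_filter_mem] at *
  omega

theorem IsLowerSet.two_mul_sum_card_le (h𝒜 : IsLowerSet (𝒜 : Set (Finset α)))
    (hR : ∀ s ∈ 𝒜, s ⊆ R) : 2 * ∑ s ∈ 𝒜, #s ≤ #R * #𝒜 := by
  rw [sum_card_eq_sum_card_filter_mem hR, mul_sum, card_eq_sum_ones R, sum_mul, one_mul]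
  exact sum_le_sum fun a _ => h𝒜.two_mul_card_filter_mem_le a

theorem IsLowerSet.two_mul_sum_card_lt (h𝒜 : IsLowerSet (𝒜 : Set (Finset α)))
    (hR : ∀ s ∈ 𝒜, s ⊆ R) (ha : a ∈ R) (ht : t ∈ 𝒜) (hat : a ∉ t) (hins : insert a t ∉ 𝒜) :
    2 * ∑ s ∈ 𝒜, #s < #R * #𝒜 := by
  rw [sum_card_eq_sum_card_filter_mem hR, mul_sum, card_eq_sum_ones R, sum_mul, one_mul]
  exact sum_lt_sum (fun b _ => h𝒜.two_mul_card_filter_mem_le b)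
    ⟨a, ha, h𝒜.two_mul_card_filter_mem_lt ht hat hins⟩

theorem sum_powerset_two_mul_card_add (L : Finset α) (c : ℤ) :
    ∑ s ∈ L.powerset, (2 * (#s : ℤ) + c) = (#L + c) * 2 ^ #L := by
  have hcompl : ∑ s ∈ L.powerset, (#s : ℤ) = ∑ s ∈ L.powerset, (#(L \ s) : ℤ) :=
    sum_nbij' (L \ ·) (L \ ·) (fun _ _ => mem_powerset.2 sdiff_subset)
      (fun _ _ => mem_powerset.2 sdiff_subset)
      (fun _ hs => sdiff_sdiff_eq_self (mem_powerset.1 hs))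
      (fun _ hs => sdiff_sdiff_eq_self (mem_powerset.1 hs))
      (fun _ hs => by rw [sdiff_sdiff_eq_self (mem_powerset.1 hs)])
  have hsum : ∑ s ∈ L.powerset, 2 * (#s : ℤ) = #L * 2 ^ #L := by
    rw [← mul_sum, two_mul]
    nth_rw 2 [hcompl]
    rw [← sum_add_distrib]
    calc ∑ s ∈ L.powerset, ((#s : ℤ) + #(L \ s)) = ∑ s ∈ L.powerset, (#L : ℤ) :=
          sum_congr rfl fun s hs => by
            rw [← Nat.cast_add, add_comm, card_sdiff_add_card_eq_card (mem_powerset.1 hs)]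
      _ = #L * 2 ^ #L := by simp [card_powerset, mul_comm]
  rw [sum_add_distrib, hsum, sum_const, card_powerset, nsmul_eq_mul]
  push_cast
  ring

theorem injOn_insert_insert {u v : α} (huv : u ≠ v) :
    Set.InjOn (fun s => insert u (insert v s)) {s : Finset α | u ∉ s ∧ v ∉ s} := by
  have herase : ∀ s : Finset α, u ∉ s → v ∉ s → ((insert u (insert v s)).erase u).erase v = s :=
    fun s hu hv => by rw [erase_insert (by simp [huv, hu]), erase_insert hv]
  rintro s ⟨hu, hv⟩ s' ⟨hu', hv'⟩ h
  rw [← herase s hu hv, ← herase s' hu' hv', show insert u (insert v s) = _ from h]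

end Finset

section Average

variable {V : Type*} [Fintype V] {G : SimpleGraph V} {l : ℕ}

theorem sum_nearlyIndep_sub_two_mul_card (m : ℤ) :
    ∑ S ∈ nearlyIndep G l, (m - 2 * (#S : ℤ)) = m * sigmaNI G l - 2 * sumNI G l := by
  rw [sum_sub_distrib, sum_const, nsmul_eq_mul, ← mul_sum, sigmaNI, sumNI]
  push_cast
  ring

theorem sigmaNI_ne_zero_of_sum_ne_zero {f : Finset V → ℤ}
    (h : ∑ S ∈ nearlyIndep G l, f S ≠ 0) : sigmaNI G l ≠ 0 := by
  intro h0
  rw [sigmaNI, card_eq_zero] at h0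
  simp [h0] at h

theorem avNI_lt_of_sum_pos {m : ℤ} (h : 0 < ∑ S ∈ nearlyIndep G l, (m - 2 * (#S : ℤ))) :
    avNI G l < m / 2 := by
  have hσ := sigmaNI_ne_zero_of_sum_ne_zero h.ne'
  rw [sum_nearlyIndep_sub_two_mul_card] at h
  have hσpos : (0 : ℚ) < sigmaNI G l := by exact_mod_cast Nat.pos_of_ne_zero hσ
  rw [avNI, if_neg hσ, div_lt_div_iff₀ hσpos two_pos]
  exact_mod_cast (by linarith : (sumNI G l : ℤ) * 2 < m * sigmaNI G l)

theorem lt_avNI_of_sum_pos {m : ℤ} (h : 0 < ∑ S ∈ nearlyIndep G l, (2 * (#S : ℤ) - m)) :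
    (m : ℚ) / 2 < avNI G l := by
  have hσ := sigmaNI_ne_zero_of_sum_ne_zero h.ne'
  have hneg : ∑ S ∈ nearlyIndep G l, (m - 2 * (#S : ℤ)) < 0 := by
    rw [← neg_pos, ← sum_neg_distrib]
    simpa using h
  rw [sum_nearlyIndep_sub_two_mul_card] at hneg
  have hσpos : (0 : ℚ) < sigmaNI G l := by exact_mod_cast Nat.pos_of_ne_zero hσ
  rw [avNI, if_neg hσ, div_lt_div_iff₀ two_pos hσpos]
  exact_mod_cast (by linarith : m * (sigmaNI G l : ℤ) < sumNI G l * 2)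

end Average

namespace SimpleGraph

section IndepSets

variable {V : Type*} (G : SimpleGraph V)

def indepSetsIn (R : Finset V) : Finset (Finset V) := {I ∈ R.powerset | G.IsIndepSet I}

variable {G} {R I : Finset V}

theorem mem_indepSetsIn : I ∈ G.indepSetsIn R ↔ I ⊆ R ∧ G.IsIndepSet I := by
  simp [indepSetsIn]

theorem isLowerSet_indepSetsIn : IsLowerSet (G.indepSetsIn R : Set (Finset V)) := by
  intro I J hJI hI
  rw [Finset.mem_coe, mem_indepSetsIn] at hI ⊢
  exact ⟨(hJI : J ⊆ I).trans hI.1, Set.Pairwise.mono (Finset.coe_subset.2 hJI) hI.2⟩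

theorem two_mul_sum_card_indepSetsIn_le :
    2 * ∑ I ∈ G.indepSetsIn R, #I ≤ #R * #(G.indepSetsIn R) :=
  isLowerSet_indepSetsIn.two_mul_sum_card_le fun _ hI => (mem_indepSetsIn.1 hI).1

theorem sum_sub_two_mul_card_indepSetsIn_nonneg {k : ℤ} (hk : (#R : ℤ) ≤ k) :
    0 ≤ ∑ I ∈ G.indepSetsIn R, (k - 2 * (#I : ℤ)) := by
  have hle : (2 * ∑ I ∈ G.indepSetsIn R, #I : ℤ) ≤ #R * #(G.indepSetsIn R) := by
    exact_mod_cast two_mul_sum_card_indepSetsIn_le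
  have hmul := mul_le_mul_of_nonneg_right hk (Nat.cast_nonneg (α := ℤ) #(G.indepSetsIn R))
  rw [Finset.sum_sub_distrib, Finset.sum_const, nsmul_eq_mul, ← Finset.mul_sum]
  push_cast at hle
  linarith

theorem sum_sub_two_mul_card_indepSetsIn_pos {k : ℤ} (hk : (#R : ℤ) ≤ k)
    (hstrict : (#R : ℤ) < k ∨ ∃ x ∈ R, ∃ y ∈ R, G.Adj x y) :
    0 < ∑ I ∈ G.indepSetsIn R, (k - 2 * (#I : ℤ)) := by
  rw [Finset.sum_sub_distrib, Finset.sum_const, nsmul_eq_mul, ← Finset.mul_sum]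
  have hempty : ∅ ∈ G.indepSetsIn R := mem_indepSetsIn.2 ⟨R.empty_subset, by simp⟩
  have hpos : (0 : ℤ) < #(G.indepSetsIn R) := by exact_mod_cast Finset.card_pos.2 ⟨_, hempty⟩
  rcases hstrict with hlt | ⟨x, hx, y, hy, hxy⟩
  · have hle : (2 * ∑ I ∈ G.indepSetsIn R, #I : ℤ) ≤ #R * #(G.indepSetsIn R) := by
      exact_mod_cast two_mul_sum_card_indepSetsIn_le
    push_cast at hle
    nlinarith
  · have hlt : (2 * ∑ I ∈ G.indepSetsIn R, #I : ℤ) < #R * #(G.indepSetsIn R) := by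
      refine mod_cast isLowerSet_indepSetsIn.two_mul_sum_card_lt
        (fun _ hI => (mem_indepSetsIn.1 hI).1) hx (t := {y}) ?_ (by simpa using hxy.ne) ?_
      · exact mem_indepSetsIn.2 ⟨Finset.singleton_subset_iff.2 hy, by simp⟩
      · rw [mem_indepSetsIn, not_and]
        exact fun _ hind => hind (by simp) (by simp) hxy.ne hxy
    push_cast at hlt
    nlinarith

theorem indepSetsIn_eq_powerset (hR : G.IsIndepSet (R : Set V)) : G.indepSetsIn R = R.powerset :=
  Finset.filter_true_of_mem fun _ hI => Set.Pairwise.mono (Finset.coe_subset.2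
    (Finset.mem_powerset.1 hI)) hR

theorem sum_indepSetsIn_of_isIndepSet (hR : G.IsIndepSet (R : Set V)) (c : ℤ) :
    ∑ I ∈ G.indepSetsIn R, (2 * (#I : ℤ) + c) = (#R + c) * 2 ^ #R := by
  rw [indepSetsIn_eq_powerset hR, Finset.sum_powerset_two_mul_card_add]

end IndepSets

section OneEdge

variable {V : Type*} [Fintype V] (G : SimpleGraph V)

def inducedEdges (S : Finset V) : Finset (Sym2 V) :=
  G.edgeFinset.filter fun e => ∀ v ∈ e, v ∈ S

/-- For an edge `uv` this excludes `u` and `v` themselves, as `v ∈ N(u)` and `u ∈ N(v)`. -/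
def farFinset (e : Sym2 V) : Finset V := {x | x ∉ nbhdUnion G e}

def singleEdgeSets (e : Sym2 V) : Finset (Finset V) := {S | G.inducedEdges S = {e}}

variable {G} {S I : Finset V} {u v x a b : V}

theorem mk_mem_inducedEdges : s(a, b) ∈ G.inducedEdges S ↔ G.Adj a b ∧ a ∈ S ∧ b ∈ S := by
  simp [inducedEdges, Sym2.mem_iff]

theorem mem_farFinset_mk : x ∈ G.farFinset s(u, v) ↔ ¬G.Adj u x ∧ ¬G.Adj v x := by
  simp [farFinset, nbhdUnion]

theorem notMem_farFinset_mk : x ∉ G.farFinset s(u, v) ↔ G.Adj u x ∨ G.Adj v x := by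
  rw [mem_farFinset_mk, not_and_or, not_not, not_not]

theorem left_notMem_farFinset (h : G.Adj u v) : u ∉ G.farFinset s(u, v) :=
  fun hu => (mem_farFinset_mk.1 hu).2 h.symm

theorem right_notMem_farFinset (h : G.Adj u v) : v ∉ G.farFinset s(u, v) :=
  fun hv => (mem_farFinset_mk.1 hv).1 h

theorem inducedEdges_eq_singleton_iff (h : G.Adj u v) :
    G.inducedEdges S = {s(u, v)} ↔
      u ∈ S ∧ v ∈ S ∧ ∀ a ∈ S, ∀ b ∈ S, G.Adj a b → s(a, b) = s(u, v) := by
  rw [Finset.eq_singleton_iff_unique_mem, mk_mem_inducedEdges]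
  refine ⟨fun ⟨⟨_, hu, hv⟩, huniq⟩ => ⟨hu, hv, fun a ha b hb hab =>
      huniq _ (mk_mem_inducedEdges.2 ⟨hab, ha, hb⟩)⟩,
    fun ⟨hu, hv, huniq⟩ => ⟨⟨h, hu, hv⟩, fun e he => ?_⟩⟩
  induction e using Sym2.ind with
  | _ a b =>
    obtain ⟨hab, ha, hb⟩ := mk_mem_inducedEdges.1 he
    exact huniq a ha b hb hab

theorem singleEdgeSets_mk (h : G.Adj u v) :
    G.singleEdgeSets s(u, v) =
      (G.indepSetsIn (G.farFinset s(u, v))).image fun I => insert u (insert v I) := by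
  ext S
  simp only [singleEdgeSets, Finset.mem_filter, Finset.mem_univ, true_and, Finset.mem_image,
    inducedEdges_eq_singleton_iff h, mem_indepSetsIn]
  constructor
  · rintro ⟨hu, hv, huniq⟩
    refine ⟨(S.erase u).erase v, ⟨fun x hx => ?_, fun a ha b hb hab hadj => ?_⟩, ?_⟩
    · obtain ⟨hxv, hxu, hxS⟩ : x ≠ v ∧ x ≠ u ∧ x ∈ S := by simpa using hx
      refine mem_farFinset_mk.2 ⟨fun hux => ?_, fun hvx => ?_⟩
      · rcases Sym2.eq_or_eq_of_mk_eq_mk (huniq x hxS u hu hux.symm) with rfl | rfl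
        exacts [hxu rfl, hxv rfl]
      · rcases Sym2.eq_or_eq_of_mk_eq_mk (huniq x hxS v hv hvx.symm) with rfl | rfl
        exacts [hxu rfl, hxv rfl]
    · obtain ⟨⟨haS, hau⟩, hav⟩ : (a ∈ S ∧ a ≠ u) ∧ a ≠ v := by simpa using ha
      have hbS : b ∈ S := by simp at hb; exact hb.1.1
      rcases Sym2.eq_or_eq_of_mk_eq_mk (huniq a haS b hbS hadj) with rfl | rfl
      exacts [hau rfl, hav rfl]
    · rw [Finset.insert_erase (Finset.mem_erase.2 ⟨h.ne.symm, hv⟩), Finset.insert_erase hu]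
  · rintro ⟨I, ⟨hIR, hI⟩, rfl⟩
    have hend : ∀ a ∈ insert u (insert v I), ∀ b ∈ insert u (insert v I), G.Adj a b →
        a = u ∨ a = v := by
      intro a ha b hb hab
      simp only [Finset.mem_insert] at ha hb
      rcases ha with rfl | rfl | ha
      · exact Or.inl rfl
      · exact Or.inr rfl
      obtain ⟨hua, hva⟩ := mem_farFinset_mk.1 (hIR ha)
      rcases hb with rfl | rfl | hb
      · exact absurd hab.symm hua
      · exact absurd hab.symm hva
      · exact absurd hab (hI ha hb hab.ne)
    refine ⟨by simp, by simp, fun a ha b hb hab => ?_⟩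
    rcases hend a ha b hb hab with rfl | rfl <;> rcases hend b hb a ha hab.symm with rfl | rfl
    exacts [absurd hab (G.loopless.irrefl _), rfl, Sym2.eq_swap, absurd hab (G.loopless.irrefl _)]

theorem nearlyIndep_one_eq_biUnion :
    nearlyIndep G 1 = G.edgeFinset.biUnion G.singleEdgeSets := by
  ext S
  simp only [nearlyIndep, singleEdgeSets, edgesIn, Finset.mem_filter, Finset.mem_univ, true_and,
    Finset.mem_biUnion, Finset.card_eq_one]
  refine ⟨fun ⟨e, he⟩ => ⟨e, ?_, he⟩, fun ⟨e, _, he⟩ => ⟨e, he⟩⟩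
  have : e ∈ ({e} : Finset (Sym2 V)) := Finset.mem_singleton_self e
  rw [← he] at this
  exact (Finset.mem_filter.1 this).1

theorem pairwiseDisjoint_singleEdgeSets :
    (G.edgeFinset : Set (Sym2 V)).PairwiseDisjoint G.singleEdgeSets := by
  intro e _ f _ hef
  refine Finset.disjoint_left.2 fun S hSe hSf => hef ?_
  simp only [singleEdgeSets, Finset.mem_filter] at hSe hSf
  exact Finset.singleton_injective (hSe.2.symm.trans hSf.2)

theorem card_insert_insert_of_mem_indepSetsIn (h : G.Adj u v)
    (hI : I ∈ G.indepSetsIn (G.farFinset s(u, v))) : #(insert u (insert v I)) = #I + 2 := by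
  have hIR := (mem_indepSetsIn.1 hI).1
  rw [Finset.card_insert_of_notMem, Finset.card_insert_of_notMem fun hv =>
    right_notMem_farFinset h (hIR hv)]
  simp only [Finset.mem_insert, not_or]
  exact ⟨h.ne, fun hu => left_notMem_farFinset h (hIR hu)⟩

theorem sum_nearlyIndep_one {M : Type*} [AddCommMonoid M] (F : ℕ → M) :
    ∑ S ∈ nearlyIndep G 1, F #S =
      ∑ e ∈ G.edgeFinset, ∑ I ∈ G.indepSetsIn (G.farFinset e), F (#I + 2) := by
  rw [nearlyIndep_one_eq_biUnion, Finset.sum_biUnion pairwiseDisjoint_singleEdgeSets]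
  refine Finset.sum_congr rfl fun e he => ?_
  induction e using Sym2.ind with
  | _ u v =>
    have h : G.Adj u v := mem_edgeFinset.1 he
    rw [singleEdgeSets_mk h, Finset.sum_image]
    · exact Finset.sum_congr rfl fun I hI => by
        rw [card_insert_insert_of_mem_indepSetsIn h hI]
    · refine (Finset.injOn_insert_insert h.ne).mono fun I hI => ?_
      have hIR := (mem_indepSetsIn.1 hI).1
      exact ⟨fun hu => left_notMem_farFinset h (hIR hu),
        fun hv => right_notMem_farFinset h (hIR hv)⟩

end OneEdge

section Connected

variable {V : Type*} [Fintype V] {G : SimpleGraph V} {u v : V}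

theorem card_farFinset_add_card_le {T : Finset V} (hT : ∀ x ∈ T, G.Adj u x ∨ G.Adj v x) :
    #(G.farFinset s(u, v)) + #T ≤ Fintype.card V := by
  have hdisj : Disjoint (G.farFinset s(u, v)) T :=
    Finset.disjoint_right.2 fun x hx => notMem_farFinset_mk.2 (hT x hx)
  rw [← Finset.card_union_of_disjoint hdisj]
  exact Finset.card_le_univ _

theorem Connected.exists_adj_ne_ne (hG : G.Connected) (h3 : 3 ≤ Fintype.card V) (u v : V) :
    ∃ w, w ≠ u ∧ w ≠ v ∧ (G.Adj u w ∨ G.Adj v w) := by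
  obtain ⟨z, -, hz⟩ := Finset.exists_mem_notMem_of_card_lt_card (s := {u, v}) (t := Finset.univ)
    ((Finset.card_le_two).trans_lt (by rw [Finset.card_univ]; omega))
  obtain ⟨p⟩ := hG.preconnected u z
  obtain ⟨d, -, hd, hd'⟩ := p.exists_boundary_dart {u, v} (by simp) (by simpa using hz)
  simp only [Set.mem_insert_iff, Set.mem_singleton_iff, not_or] at hd hd'
  rcases hd with h | h
  · exact ⟨d.snd, hd'.1, hd'.2, Or.inl (h ▸ d.adj)⟩
  · exact ⟨d.snd, hd'.1, hd'.2, Or.inr (h ▸ d.adj)⟩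

theorem Connected.card_farFinset_add_three_le (hG : G.Connected) (h3 : 3 ≤ Fintype.card V)
    (h : G.Adj u v) : #(G.farFinset s(u, v)) + 3 ≤ Fintype.card V := by
  obtain ⟨w, hwu, hwv, hw⟩ := hG.exists_adj_ne_ne h3 u v
  have := card_farFinset_add_card_le (G := G) (u := u) (v := v) (T := {u, v, w})
    (by simp [h, h.symm, hw])
  rwa [Finset.card_insert_of_notMem (by simp [h.ne, hwu.symm]),
    Finset.card_pair hwv.symm] at this

theorem Connected.exists_adj_of_card_ge_two (hG : G.Connected) (h2 : 2 ≤ Fintype.card V) :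
    ∃ u v, G.Adj u v := by
  obtain ⟨a, b, hab⟩ := Fintype.exists_pair_of_one_lt_card h2
  obtain ⟨v, hv⟩ := (hG.preconnected a b).nonempty_neighborSet_left hab
  exact ⟨a, v, hv⟩

theorem eq_or_eq_or_eq_of_notMem_farFinset {w y : V} (h : G.Adj u v) (hwu : w ≠ u) (hwv : w ≠ v)
    (hw : G.Adj u w ∨ G.Adj v w) (hsize : Fintype.card V < #(G.farFinset s(u, v)) + 4)
    (hy : y ∉ G.farFinset s(u, v)) : y = u ∨ y = v ∨ y = w := by
  by_contra! hne
  have := card_farFinset_add_card_le (G := G) (u := u) (v := v) (T := {u, v, w, y})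
    (by simp [h, h.symm, hw, notMem_farFinset_mk.1 hy])
  rw [Finset.card_insert_of_notMem (by simp [h.ne, hwu.symm, hne.1.symm]),
    Finset.card_insert_of_notMem (by simp [hwv.symm, hne.2.1.symm]),
    Finset.card_pair hne.2.2.symm] at this
  omega

theorem Connected.adj_of_mem_farFinset {w x : V} (hG : G.Connected) (h : G.Adj u v)
    (hR : ∀ x ∈ G.farFinset s(u, v), ∀ y ∈ G.farFinset s(u, v), ¬G.Adj x y)
    (hcompl : ∀ y ∉ G.farFinset s(u, v), y = u ∨ y = v ∨ y = w)
    (hx : x ∈ G.farFinset s(u, v)) : G.Adj w x := by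
  obtain ⟨y, hxy⟩ := (hG.preconnected x u).nonempty_neighborSet_left
    (fun hxu => left_notMem_farFinset h (hxu ▸ hx))
  rw [mem_neighborSet] at hxy
  obtain ⟨hux, hvx⟩ := mem_farFinset_mk.1 hx
  rcases hcompl y (fun hy => hR x hx y hy hxy) with rfl | rfl | rfl
  exacts [absurd hxy.symm hux, absurd hxy.symm hvx, hxy.symm]

/-- If `|N(u) ∪ N(v)| = 3` and `V ∖ (N(u) ∪ N(v))` is independent, the third vertex `w` of
`N(u) ∪ N(v)` is adjacent to all of `V ∖ (N(u) ∪ N(v))`, so an edge at `w` does better. -/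
theorem Connected.exists_adj_strict (hG : G.Connected) (h5 : 5 ≤ Fintype.card V) :
    ∃ u v, G.Adj u v ∧ (#(G.farFinset s(u, v)) + 4 ≤ Fintype.card V ∨
      ∃ x ∈ G.farFinset s(u, v), ∃ y ∈ G.farFinset s(u, v), G.Adj x y) := by
  obtain ⟨u, v, huv⟩ := hG.exists_adj_of_card_ge_two (by omega)
  by_cases hsize : #(G.farFinset s(u, v)) + 4 ≤ Fintype.card V
  · exact ⟨u, v, huv, Or.inl hsize⟩
  by_cases hedge : ∃ x ∈ G.farFinset s(u, v), ∃ y ∈ G.farFinset s(u, v), G.Adj x y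
  · exact ⟨u, v, huv, Or.inr hedge⟩
  push Not at hsize hedge
  obtain ⟨w, hwu, hwv, hw⟩ := hG.exists_adj_ne_ne (by omega) u v
  have hadjw : ∀ x ∈ G.farFinset s(u, v), G.Adj w x := fun x hx =>
    hG.adj_of_mem_farFinset huv hedge
      (fun y hy => eq_or_eq_or_eq_of_notMem_farFinset huv hwu hwv hw hsize hy) hx
  obtain ⟨x₀, hx₀, x₁, hx₁, hx₀₁⟩ :=
    Finset.one_lt_card.1 (show 1 < #(G.farFinset s(u, v)) by omega)
  obtain ⟨t, ht, hwt⟩ : ∃ t, (t = u ∨ t = v) ∧ G.Adj w t :=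
    hw.elim (fun h => ⟨u, Or.inl rfl, h.symm⟩) (fun h => ⟨v, Or.inr rfl, h.symm⟩)
  have htR : t ∉ G.farFinset s(u, v) := by
    rcases ht with rfl | rfl
    exacts [left_notMem_farFinset huv, right_notMem_farFinset huv]
  have hwR : w ∉ G.farFinset s(u, v) := notMem_farFinset_mk.2 hw
  refine ⟨w, x₀, hadjw x₀ hx₀, Or.inl ?_⟩
  have := card_farFinset_add_card_le (G := G) (u := w) (v := x₀) (T := {t, x₀, x₁, w})
    (by simp [hwt, hadjw x₀ hx₀, hadjw x₁ hx₁, (hadjw x₀ hx₀).symm])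
  rwa [Finset.card_insert_of_notMem (by simp [(ne_of_mem_of_not_mem hx₀ htR).symm,
      (ne_of_mem_of_not_mem hx₁ htR).symm, hwt.ne.symm]),
    Finset.card_insert_of_notMem (by simp [hx₀₁, ne_of_mem_of_not_mem hx₀ hwR]),
    Finset.card_pair (ne_of_mem_of_not_mem hx₁ hwR)] at this

theorem Connected.sum_nearlyIndep_one_pos (hG : G.Connected) (h5 : 5 ≤ Fintype.card V) :
    0 < ∑ S ∈ nearlyIndep G 1, ((Fintype.card V : ℤ) + 1 - 2 * #S) := by
  rw [sum_nearlyIndep_one fun k => (Fintype.card V : ℤ) + 1 - 2 * k]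
  have hterm : ∀ e ∈ G.edgeFinset,
      ∑ I ∈ G.indepSetsIn (G.farFinset e), ((Fintype.card V : ℤ) + 1 - 2 * ((#I + 2 : ℕ) : ℤ))
        = ∑ I ∈ G.indepSetsIn (G.farFinset e), (((Fintype.card V : ℤ) - 3) - 2 * #I) :=
    fun _ _ => Finset.sum_congr rfl fun _ _ => by push_cast; ring
  rw [Finset.sum_congr rfl hterm]
  have hsmall : ∀ e ∈ G.edgeFinset, (#(G.farFinset e) : ℤ) ≤ Fintype.card V - 3 := by
    intro e he
    induction e using Sym2.ind with
    | _ u v =>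
      have := hG.card_farFinset_add_three_le (by omega) (mem_edgeFinset.1 he)
      dsimp only at this ⊢
      omega
  obtain ⟨u, v, huv, hstrict⟩ := hG.exists_adj_strict h5
  refine Finset.sum_pos' (fun e he => sum_sub_two_mul_card_indepSetsIn_nonneg (hsmall e he))
    ⟨s(u, v), mem_edgeFinset.2 huv, sum_sub_two_mul_card_indepSetsIn_pos
      (hsmall _ (mem_edgeFinset.2 huv)) ?_⟩
  exact hstrict.imp (fun h => by omega) id

theorem Connected.avNI_one_lt (hG : G.Connected) (h5 : 5 ≤ Fintype.card V) :
    avNI G 1 < ((Fintype.card V : ℚ) + 1) / 2 := by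
  simpa using avNI_lt_of_sum_pos (m := Fintype.card V + 1) (hG.sum_nearlyIndep_one_pos h5)

end Connected

section Broom

variable {V : Type*} {c p q : V}

def broom (c p q : V) : SimpleGraph V := fromRel fun a b => (a = c ∧ b ≠ q) ∨ (a = p ∧ b = q)

theorem broom_adj {a b : V} : (broom c p q).Adj a b ↔
    a ≠ b ∧ ((a = c ∧ b ≠ q) ∨ (a = p ∧ b = q) ∨ (b = c ∧ a ≠ q) ∨ (b = p ∧ a = q)) := by
  simp [broom, or_assoc]

theorem broom_connected (hcp : c ≠ p) (hpq : p ≠ q) : (broom c p q).Connected := by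
  have hreach : ∀ x, (broom c p q).Reachable x c := by
    intro x
    by_cases hxc : x = c
    · exact hxc ▸ Reachable.refl _
    by_cases hxq : x = q
    · rw [hxq]
      have hqp : (broom c p q).Adj q p := broom_adj.2 ⟨hpq.symm, by simp⟩
      have hpc : (broom c p q).Adj p c := broom_adj.2 ⟨hcp.symm, by simp [hpq]⟩
      exact hqp.reachable.trans hpc.reachable
    · exact (broom_adj.2 ⟨hxc, by simp [hxq]⟩ : (broom c p q).Adj x c).reachable
  exact (connected_iff _).2 ⟨fun x y => (hreach x).trans (hreach y).symm, ⟨c⟩⟩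

variable [Fintype V]

def broomLeaves (c p q : V) : Finset V := {x | x ≠ c ∧ x ≠ p ∧ x ≠ q}

theorem mem_broomLeaves {x : V} : x ∈ broomLeaves c p q ↔ x ≠ c ∧ x ≠ p ∧ x ≠ q := by
  simp [broomLeaves]

theorem card_broomLeaves_add_three (hcp : c ≠ p) (hcq : c ≠ q) (hpq : p ≠ q) :
    #(broomLeaves c p q) + 3 = Fintype.card V := by
  have : (broomLeaves c p q)ᶜ = {c, p, q} := by
    ext x
    simp [mem_broomLeaves, or_iff_not_imp_left]
  rw [← Finset.card_add_card_compl (broomLeaves c p q), this,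
    Finset.card_insert_of_notMem (by simp [hcp, hcq]), Finset.card_pair hpq]

theorem edgeFinset_broom (hcp : c ≠ p) (hpq : p ≠ q) :
    (broom c p q).edgeFinset =
      insert s(p, q) (insert s(c, p) ((broomLeaves c p q).image (s(c, ·)))) := by
  ext e
  induction e using Sym2.ind with
  | _ a b =>
    simp only [mem_edgeFinset, mem_edgeSet, broom_adj, Finset.mem_insert, Finset.mem_image,
      mem_broomLeaves, Sym2.eq_iff]
    constructor
    · rintro ⟨hab, h⟩
      rcases h with ⟨rfl, hb⟩ | h | ⟨rfl, ha⟩ | h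
      · by_cases hbp : b = p
        · exact Or.inr (Or.inl (Or.inl ⟨rfl, hbp⟩))
        · exact Or.inr (Or.inr ⟨b, ⟨hab.symm, hbp, hb⟩, Or.inl ⟨rfl, rfl⟩⟩)
      · exact Or.inl (Or.inl h)
      · by_cases hap : a = p
        · exact Or.inr (Or.inl (Or.inr ⟨hap, rfl⟩))
        · exact Or.inr (Or.inr ⟨a, ⟨hab, hap, ha⟩, Or.inr ⟨rfl, rfl⟩⟩)
      · exact Or.inl (Or.inr ⟨h.2, h.1⟩)
    · intro h
      aesop

theorem card_edgeFinset_broom (hcp : c ≠ p) (hcq : c ≠ q) (hpq : p ≠ q) :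
    #(broom c p q).edgeFinset = #(broomLeaves c p q) + 2 := by
  have hinj : Function.Injective (s(c, ·) : V → Sym2 V) := fun _ _ h => Sym2.congr_right.1 h
  rw [edgeFinset_broom hcp hpq, Finset.card_insert_of_notMem, Finset.card_insert_of_notMem,
    Finset.card_image_of_injective _ hinj]
  · simp +contextual [mem_broomLeaves, hcp]
  · simp +contextual [mem_broomLeaves, hcp, hcq, hcq.symm]

theorem broom_isTree (hcp : c ≠ p) (hcq : c ≠ q) (hpq : p ≠ q) : (broom c p q).IsTree := by
  refine isTree_iff_connected_and_card.2 ⟨broom_connected hcp hpq, ?_⟩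
  rw [Nat.card_eq_fintype_card, ← edgeFinset_card, card_edgeFinset_broom hcp hcq hpq,
    Nat.card_eq_fintype_card, ← card_broomLeaves_add_three hcp hcq hpq]

theorem farFinset_broom_cp (hcp : c ≠ p) (hpq : p ≠ q) :
    (broom c p q).farFinset s(c, p) = ∅ := by
  ext x
  simp only [mem_farFinset_mk, broom_adj, Finset.notMem_empty, iff_false]
  by_cases hxq : x = q <;> by_cases hxc : x = c <;> simp_all [eq_comm]

theorem farFinset_broom_of_mem_broomLeaves (hcp : c ≠ p) (hcq : c ≠ q) {b : V}
    (hb : b ∈ broomLeaves c p q) :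
    (broom c p q).farFinset s(c, b) = {q} := by
  obtain ⟨hbc, hbp, hbq⟩ := mem_broomLeaves.1 hb
  ext x
  simp only [mem_farFinset_mk, broom_adj, Finset.mem_singleton]
  by_cases hxq : x = q <;> by_cases hxc : x = c <;> simp_all [eq_comm]

theorem farFinset_broom_pq (hcp : c ≠ p) (hcq : c ≠ q) (hpq : p ≠ q) :
    (broom c p q).farFinset s(p, q) = broomLeaves c p q := by
  ext x
  simp only [mem_farFinset_mk, broom_adj, mem_broomLeaves]
  by_cases hxq : x = q <;> by_cases hxc : x = c <;> by_cases hxp : x = p <;> simp_all [eq_comm]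

theorem isIndepSet_broomLeaves : (broom c p q).IsIndepSet (broomLeaves c p q : Set V) := by
  intro x hx y hy _
  rw [Finset.mem_coe, mem_broomLeaves] at hx hy
  simp_all [broom_adj]

theorem sum_nearlyIndep_one_broom (hcp : c ≠ p) (hcq : c ≠ q) (hpq : p ≠ q) :
    ∑ S ∈ nearlyIndep (broom c p q) 1, (2 * (#S : ℤ) - Fintype.card V) =
      2 ^ #(broomLeaves c p q) - 2 * #(broomLeaves c p q) ^ 2 + 3 * #(broomLeaves c p q) + 1 := by
  set k := #(broomLeaves c p q)
  have hn : (Fintype.card V : ℤ) = k + 3 := by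
    exact_mod_cast (card_broomLeaves_add_three hcp hcq hpq).symm
  have hterm : ∀ R : Finset V, (broom c p q).IsIndepSet (R : Set V) →
      ∑ I ∈ (broom c p q).indepSetsIn R, (2 * ((#I + 2 : ℕ) : ℤ) - Fintype.card V) =
        (#R + (1 - k)) * 2 ^ #R := by
    intro R hR
    rw [← sum_indepSetsIn_of_isIndepSet hR]
    exact Finset.sum_congr rfl fun _ _ => by push_cast; rw [hn]; ring
  have hleaf : ∀ b ∈ broomLeaves c p q,
      ∑ I ∈ (broom c p q).indepSetsIn ((broom c p q).farFinset s(c, b)),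
        (2 * ((#I + 2 : ℕ) : ℤ) - Fintype.card V) = (2 - k) * 2 := by
    intro b hb
    rw [farFinset_broom_of_mem_broomLeaves hcp hcq hb, hterm _ (by simp)]
    norm_num
    ring
  rw [sum_nearlyIndep_one fun j => 2 * (j : ℤ) - Fintype.card V, edgeFinset_broom hcp hpq,
    Finset.sum_insert, Finset.sum_insert, Finset.sum_image fun _ _ _ _ h => Sym2.congr_right.1 h,
    Finset.sum_congr rfl hleaf, farFinset_broom_pq hcp hcq hpq, farFinset_broom_cp hcp hpq,
    hterm _ isIndepSet_broomLeaves, hterm _ (by simp), Finset.sum_const, nsmul_eq_mul]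
  · simp only [Finset.card_empty]
    ring
  · simp +contextual [mem_broomLeaves, hcp]
  · simp +contextual [mem_broomLeaves, hcp, hcq, hcq.symm]

theorem lt_avNI_one_broom (hcp : c ≠ p) (hcq : c ≠ q) (hpq : p ≠ q)
    (h9 : 9 ≤ Fintype.card V) : (Fintype.card V : ℚ) / 2 < avNI (broom c p q) 1 := by
  have hk := card_broomLeaves_add_three hcp hcq hpq
  have hpow : 2 * (#(broomLeaves c p q) : ℤ) ^ 2 <
      2 ^ #(broomLeaves c p q) + 3 * #(broomLeaves c p q) + 1 := by
    exact_mod_cast Nat.two_mul_sq_lt_two_pow_add_three_mul_add_one (by omega)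
  have h := lt_avNI_of_sum_pos (m := Fintype.card V)
    (by rw [sum_nearlyIndep_one_broom hcp hcq hpq]; linarith)
  rwa [Int.cast_natCast] at h

end Broom

end SimpleGraph

theorem stmt16 (n : ℕ) (hn : 8 < n) :
    (∃ T : SimpleGraph (Fin n), T.IsTree ∧ (n : ℚ) / 2 < avNI T 1) ∧
    (∀ (V : Type) (_ : Fintype V), Fintype.card V = n →
      ∀ T : SimpleGraph V, T.IsTree → avNI T 1 < ((n : ℚ) + 1) / 2) := by
  refine ⟨?_, fun V _ hV T hT => hV ▸ hT.connected.avNI_one_lt (by omega)⟩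
  let c : Fin n := ⟨0, by omega⟩
  let p : Fin n := ⟨1, by omega⟩
  let q : Fin n := ⟨2, by omega⟩
  have hcp : c ≠ p := by simp [c, p, Fin.ext_iff]
  have hcq : c ≠ q := by simp [c, q, Fin.ext_iff]
  have hpq : p ≠ q := by simp [p, q, Fin.ext_iff]
  refine ⟨SimpleGraph.broom c p q, SimpleGraph.broom_isTree hcp hcq hpq, ?_⟩
  simpa using SimpleGraph.lt_avNI_one_broom hcp hcq hpq (by rw [Fintype.card_fin]; exact hn)
end
end

section
/- Let G = (V, E) be a finite simple graph with at least one edge, and let uv ∈ E. Set l = |N(u) ∪ N(v)|, m_u = |N[u]| and m_v = |N[v]|. Then 1 / ( 2^{l−2} + 2^{l−m_u} + 2^{l−m_v} + 1 ) ≤ σ_0( G − (N[v] ∪ N[u]) ) / σ_0(G) ≤ 1 − σ_0(G − v)/σ_0(G). In particular, σ_0( G − (N[v] ∪ N[u]) ) / σ_0(G) ≥ 1 / ( 3·2^{l−2} + 1 ). -/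
open scoped Classical
open Finset

noncomputable section

/-!
Let `A = N(u) ∪ N(v) = N[u] ∪ N[v]`. Adding `v` to an independent set of `G - A` gives an
independent set of `G` containing `v`, while the independent sets of `G - v` are those avoiding
`v`; hence `σ₀(G - A) + σ₀(G - v) ≤ σ₀(G)`. Splitting an independent set `S` of `G` as
`(S ∩ A, S \ A)` gives `σ₀(G) ≤ p · σ₀(G - A)`, where `p` counts the independent subsets of `A`.
Such a subset avoids both `u` and `v` (at most `2^(l-2)` choices), or contains `u` and then
nothing else of `N[u]` (at most `2^(l-m_u)`), or likewise contains `v`. Since `m_u, m_v ≥ 2`,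
the three terms are at most `3 · 2^(l-2)`.
-/

section IndependentSets

variable {V : Type*} [Fintype V] (G : SimpleGraph V)

theorem mem_nearlyIndep_zero_iff {S : Finset V} :
    S ∈ nearlyIndep G 0 ↔ G.IsIndepSet (S : Set V) := by
  simp only [nearlyIndep, edgesIn, mem_filter, mem_univ, true_and, card_eq_zero,
    filter_eq_empty_iff, SimpleGraph.mem_edgeFinset]
  constructor
  · intro h a ha b hb _ hab
    exact h (G.mem_edgeSet.mpr hab) fun w hw => by
      rcases Sym2.mem_iff.mp hw with rfl | rfl <;> assumption
  · intro h e he hS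
    induction e using Sym2.ind with
    | _ a b =>
      exact h (hS a (Sym2.mem_mk_left a b)) (hS b (Sym2.mem_mk_right a b)) (G.ne_of_adj he) he

theorem sigmaNI_zero_pos : 0 < sigmaNI G 0 :=
  card_pos.mpr ⟨∅, by simp [mem_nearlyIndep_zero_iff]⟩

theorem sigmaNI_induce (s : Set V) [Fintype s] :
    sigmaNI (G.induce s) 0 = #{S ∈ nearlyIndep G 0 | ↑S ⊆ s} := by
  refine card_nbij (map (Function.Embedding.subtype (· ∈ s))) ?_ (map_injective _).injOn ?_
  · intro S hS
    simp only [coe_filter, mem_coe, mem_nearlyIndep_zero_iff] at hS ⊢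
    refine ⟨?_, by rw [coe_map]; exact Set.image_subset_iff.mpr fun x _ => x.2⟩
    rw [coe_map]
    rintro _ ⟨a, ha, rfl⟩ _ ⟨b, hb, rfl⟩ hne hadj
    exact hS ha hb (ne_of_apply_ne _ hne) hadj
  · intro T hT
    simp only [coe_filter, mem_nearlyIndep_zero_iff] at hT
    refine ⟨T.subtype (· ∈ s), ?_, subtype_map_of_mem fun x hx => hT.2 hx⟩
    rw [mem_coe, mem_nearlyIndep_zero_iff]
    intro a ha b hb hne hadj
    exact hT.1 (mem_subtype.mp ha) (mem_subtype.mp hb) (Subtype.coe_ne_coe.mpr hne) hadj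

theorem sigmaNI_deleteVerts (A : Set V) [Fintype ↥(Aᶜ)] :
    sigmaNI (deleteVerts G A) 0 =
      #((nearlyIndep G 0).filter fun S : Finset V => Disjoint (S : Set V) A) := by
  simp only [deleteVerts, sigmaNI_induce, Set.subset_compl_iff_disjoint_right]

theorem sigmaNI_deleteVerts_congr {A B : Set V} [Fintype ↥(Aᶜ)] [Fintype ↥(Bᶜ)] (h : A = B) :
    sigmaNI (deleteVerts G A) 0 = sigmaNI (deleteVerts G B) 0 := by
  rw [sigmaNI_deleteVerts, sigmaNI_deleteVerts, h]

theorem sigmaNI_deleteVerts_add_sigmaNI_deleteVerts_singleton_le {v : V} {A : Set V}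
    [Fintype ↥(Aᶜ)] [Fintype ↥(({v} : Set V)ᶜ)] (hv : v ∈ A) (hN : G.neighborSet v ⊆ A) :
    sigmaNI (deleteVerts G A) 0 + sigmaNI (deleteVerts G {v}) 0 ≤ sigmaNI G 0 := by
  rw [sigmaNI_deleteVerts, sigmaNI_deleteVerts, sigmaNI,
    ← card_filter_add_card_filter_not (s := nearlyIndep G 0) (p := (v ∈ ·))]
  refine Nat.add_le_add ?_ (le_of_eq ?_)
  · refine card_le_card_of_injOn (insert v) ?_ ?_
    · intro S hS
      simp only [coe_filter, mem_nearlyIndep_zero_iff] at hS ⊢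
      refine ⟨?_, mem_insert_self v S⟩
      rw [coe_insert, G.isIndepSet_iff, Set.pairwise_insert]
      have hnadj : ∀ b ∈ S, ¬G.Adj v b := fun b hb hvb => Set.disjoint_left.mp hS.2 hb (hN hvb)
      exact ⟨hS.1, fun b hb _ => ⟨hnadj b hb, fun hbv => hnadj b hb hbv.symm⟩⟩
    · intro S hS T hT hST
      have hvS : ∀ S ∈ ((nearlyIndep G 0).filter fun S : Finset V => Disjoint (S : Set V) A),
          v ∉ S := fun S hS hvS => Set.disjoint_left.mp (mem_filter.mp hS).2 hvS hv
      rw [← erase_insert (hvS S hS), ← erase_insert (hvS T hT)]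
      exact congrArg (·.erase v) hST
  · congr 1
    ext S
    simp only [mem_filter, Set.disjoint_singleton_right, mem_coe]

theorem sigmaNI_le_mul_sigmaNI_deleteVerts (A : Finset V) [Fintype ↥((A : Set V)ᶜ)] :
    sigmaNI G 0 ≤ #{T ∈ nearlyIndep G 0 | T ⊆ A} * sigmaNI (deleteVerts G A) 0 := by
  rw [sigmaNI_deleteVerts, sigmaNI, ← card_product]
  refine card_le_card_of_injOn (fun S => (S ∩ A, S \ A)) ?_ ?_
  · intro S hS
    simp only [coe_product, coe_filter, Set.mem_prod, mem_coe, mem_nearlyIndep_zero_iff] at hS ⊢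
    refine ⟨⟨hS.mono ?_, inter_subset_right⟩, hS.mono ?_, ?_⟩
    · exact_mod_cast inter_subset_left
    · exact_mod_cast sdiff_subset
    · exact_mod_cast sdiff_disjoint
  · intro S _ T _ hST
    simp only [Prod.mk.injEq] at hST
    rw [← sdiff_union_inter S A, ← sdiff_union_inter T A, hST.1, hST.2]

theorem card_indep_subset_mem_le {u : V} {A : Finset V}
    (hA : insert u (G.neighborFinset u) ⊆ A) :
    #{T ∈ nearlyIndep G 0 | T ⊆ A ∧ u ∈ T} ≤ 2 ^ (#A - #(insert u (G.neighborFinset u))) := by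
  rw [← card_sdiff_of_subset hA, ← card_powerset]
  refine card_le_card_of_injOn (fun T => T.erase u) ?_ ?_
  · intro T hT
    simp only [coe_filter, mem_nearlyIndep_zero_iff, mem_coe, mem_powerset] at hT ⊢
    obtain ⟨hind, hTA, huT⟩ := hT
    intro x hx
    obtain ⟨hxu, hxT⟩ := mem_erase.mp hx
    rw [mem_sdiff, mem_insert, SimpleGraph.mem_neighborFinset]
    refine ⟨hTA hxT, ?_⟩
    rintro (rfl | hux)
    · exact hxu rfl
    · exact hind huT hxT (Ne.symm hxu) hux
  · intro S hS T hT hST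
    rw [← insert_erase (mem_filter.mp hS).2.2, ← insert_erase (mem_filter.mp hT).2.2]
    exact congrArg (insert u) hST

theorem card_indep_subset_le {u v : V} (huv : G.Adj u v) {A : Finset V}
    (hu : insert u (G.neighborFinset u) ⊆ A) (hv : insert v (G.neighborFinset v) ⊆ A) :
    #{T ∈ nearlyIndep G 0 | T ⊆ A} ≤ 2 ^ (#A - 2) + 2 ^ (#A - #(insert u (G.neighborFinset u)))
      + 2 ^ (#A - #(insert v (G.neighborFinset v))) := by
  have hneither : #{T ∈ nearlyIndep G 0 | T ⊆ A ∧ u ∉ T ∧ v ∉ T} ≤ 2 ^ (#A - 2) := by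
    have huvA : {u, v} ⊆ A := insert_subset (hu (mem_insert_self u _))
      (singleton_subset_iff.mpr (hv (mem_insert_self v _)))
    calc _ ≤ #(A \ {u, v}).powerset := card_le_card fun T hT => by
            simp only [mem_filter, mem_powerset] at hT ⊢
            obtain ⟨-, hTA, huT, hvT⟩ := hT
            intro x hx
            rw [mem_sdiff, mem_insert, mem_singleton]
            exact ⟨hTA hx, by rintro (rfl | rfl) <;> contradiction⟩
      _ = 2 ^ (#A - 2) := by rw [card_powerset, card_sdiff_of_subset huvA, card_pair huv.ne]
  have hcover : {T ∈ nearlyIndep G 0 | T ⊆ A} ⊆ {T ∈ nearlyIndep G 0 | T ⊆ A ∧ u ∉ T ∧ v ∉ T}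
      ∪ {T ∈ nearlyIndep G 0 | T ⊆ A ∧ u ∈ T} ∪ {T ∈ nearlyIndep G 0 | T ⊆ A ∧ v ∈ T} := by
    intro T
    simp only [mem_union, mem_filter]
    tauto
  calc _ ≤ _ := card_le_card hcover
    _ ≤ _ := (card_union_le _ _).trans (Nat.add_le_add_right (card_union_le _ _) _)
    _ ≤ _ := Nat.add_le_add (Nat.add_le_add hneither (card_indep_subset_mem_le G hu))
        (card_indep_subset_mem_le G hv)

theorem two_le_card_insert_neighborFinset {u v : V} (huv : G.Adj u v) :
    2 ≤ #(insert u (G.neighborFinset u)) :=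
  card_pair huv.ne ▸ card_le_card
    (insert_subset_insert u (singleton_subset_iff.mpr ((G.mem_neighborFinset u v).mpr huv)))

theorem insert_neighborSet_union_insert_neighborSet {u v : V} (huv : G.Adj u v) :
    insert v (G.neighborSet v) ∪ insert u (G.neighborSet u) =
      ↑(G.neighborFinset u ∪ G.neighborFinset v) := by
  ext x
  simp only [coe_union, SimpleGraph.coe_neighborFinset, Set.mem_union, Set.mem_insert_iff,
    SimpleGraph.mem_neighborSet]
  have := huv.symm
  constructor
  · rintro ((rfl | h) | (rfl | h)) <;> tauto
  · tauto

theorem sigmaNI_le_mul_sigmaNI_deleteVerts_of_adj {u v : V} (huv : G.Adj u v)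
    [Fintype ↥((insert v (G.neighborSet v) ∪ insert u (G.neighborSet u))ᶜ)] :
    sigmaNI G 0 ≤ (2 ^ (#(G.neighborFinset u ∪ G.neighborFinset v) - 2)
      + 2 ^ (#(G.neighborFinset u ∪ G.neighborFinset v) - #(insert u (G.neighborFinset u)))
      + 2 ^ (#(G.neighborFinset u ∪ G.neighborFinset v) - #(insert v (G.neighborFinset v)))) *
      sigmaNI (deleteVerts G (insert v (G.neighborSet v) ∪ insert u (G.neighborSet u))) 0 := by
  have hu : insert u (G.neighborFinset u) ⊆ G.neighborFinset u ∪ G.neighborFinset v :=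
    insert_subset (mem_union_right _ ((G.mem_neighborFinset v u).mpr huv.symm)) subset_union_left
  have hv : insert v (G.neighborFinset v) ⊆ G.neighborFinset u ∪ G.neighborFinset v :=
    insert_subset (mem_union_left _ ((G.mem_neighborFinset u v).mpr huv)) subset_union_right
  rw [sigmaNI_deleteVerts_congr G (insert_neighborSet_union_insert_neighborSet G huv)]
  exact (sigmaNI_le_mul_sigmaNI_deleteVerts G _).trans
    (Nat.mul_le_mul_right _ (card_indep_subset_le G huv hu hv))

end IndependentSets

theorem one_div_add_one_le_div {α : Type*} [Field α] [LinearOrder α] [IsStrictOrderedRing α]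
    {K a s : α} (ha : 0 < a) (hs : 0 < s) (hsa : s ≤ K * a) : 1 / (K + 1) ≤ a / s := by
  have hK : 0 < K := pos_of_mul_pos_left (hs.trans_le hsa) ha.le
  rw [div_le_div_iff₀ (by positivity) hs]
  linarith

theorem stmt17 {V : Type*} [Fintype V] (G : SimpleGraph V) {u v : V} (huv : G.Adj u v)
    (l mu mv : ℕ)
    (hl : l = (G.neighborSet u ∪ G.neighborSet v).ncard)
    (hmu : mu = (insert u (G.neighborSet u)).ncard)
    (hmv : mv = (insert v (G.neighborSet v)).ncard) :
    1 / ((2 : ℚ) ^ (l - 2) + 2 ^ (l - mu) + 2 ^ (l - mv) + 1) ≤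
      (sigmaNI (deleteVerts G (insert v (G.neighborSet v) ∪ insert u (G.neighborSet u))) 0 : ℚ) /
        sigmaNI G 0 ∧
    (sigmaNI (deleteVerts G (insert v (G.neighborSet v) ∪ insert u (G.neighborSet u))) 0 : ℚ) /
        sigmaNI G 0 ≤ 1 - (sigmaNI (deleteVerts G {v}) 0 : ℚ) / sigmaNI G 0 ∧
    1 / (3 * (2 : ℚ) ^ (l - 2) + 1) ≤
      (sigmaNI (deleteVerts G (insert v (G.neighborSet v) ∪ insert u (G.neighborSet u))) 0 : ℚ) /
        sigmaNI G 0 := by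
  have hl' : l = #(G.neighborFinset u ∪ G.neighborFinset v) := by
    rw [hl, ← Set.ncard_coe_finset]; simp
  have hmu' : mu = #(insert u (G.neighborFinset u)) := by rw [hmu, ← Set.ncard_coe_finset]; simp
  have hmv' : mv = #(insert v (G.neighborFinset v)) := by rw [hmv, ← Set.ncard_coe_finset]; simp
  have lower := sigmaNI_le_mul_sigmaNI_deleteVerts_of_adj G huv
  rw [← hl', ← hmu', ← hmv'] at lower
  have upper := sigmaNI_deleteVerts_add_sigmaNI_deleteVerts_singleton_le G
    (A := insert v (G.neighborSet v) ∪ insert u (G.neighborSet u))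
    (Or.inl (Set.mem_insert v _)) fun x hx => Or.inl (Or.inr hx)
  set a := sigmaNI (deleteVerts G (insert v (G.neighborSet v) ∪ insert u (G.neighborSet u))) 0
  have ha : (0 : ℚ) < a := Nat.cast_pos.mpr (sigmaNI_zero_pos _)
  have hσ : (0 : ℚ) < sigmaNI G 0 := Nat.cast_pos.mpr (sigmaNI_zero_pos G)
  have hfirst := one_div_add_one_le_div ha hσ
    (by exact_mod_cast lower : (sigmaNI G 0 : ℚ) ≤ (2 ^ (l - 2) + 2 ^ (l - mu) + 2 ^ (l - mv)) * a)
  have hpow : ∀ m, 2 ≤ m → (2 : ℚ) ^ (l - m) ≤ 2 ^ (l - 2) := fun m hm =>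
    pow_le_pow_right₀ one_le_two (Nat.sub_le_sub_left hm l)
  have hmu2 := hpow mu (hmu' ▸ two_le_card_insert_neighborFinset G huv)
  have hmv2 := hpow mv (hmv' ▸ two_le_card_insert_neighborFinset G huv.symm)
  refine ⟨hfirst, ?_, (one_div_le_one_div_of_le (by positivity) (by linarith)).trans hfirst⟩
  rw [le_sub_iff_add_le, ← add_div, div_le_one hσ]
  exact_mod_cast upper
end
end
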